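/- Let α, β be real numbers with α² + β² = 1. In the Hilbert space ℓ² over ℕ × ℕ (square-summable complex-valued families, with standard orthonormal basis e_{(j,k)}), for each n ∈ ℕ define v_n := ∑_{j=0}^n √(n! / (j! (n-j)!)) · α^j · (-β)^{n-j} · e_{(j, n-j)}. Then the family (v_n)_{n∈ℕ} is orthonormal: ⟨v_n, v_m⟩ = 1 if n = m and ⟨v_n, v_m⟩ = 0 if n ≠ m. (Hence the map V₀ sending the number state |n⟩⊗|0⟩ to ∑_{j=0}^n C_j^n |j⟩⊗|n-j⟩ extends to an isometry, so the attenuation channel is well defined.) -/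

import Mathlib

open Finset

lemma inner_lp_single_single (i i' : ℕ × ℕ) :
    (inner (𝕜 := ℂ) (lp.single (E := fun _ : ℕ × ℕ => ℂ) 2 i (1:ℂ))
        (lp.single 2 i' (1:ℂ)))
      = if i = i' then 1 else 0 := by
  rw [lp.inner_single_left, lp.single_apply]
  by_cases h : i' = i <;> simp [h, eq_comm] <;> exact Ne.symm h

/-- The map `V₀` of the attenuation channel, sending the number state
`|n⟩⊗|0⟩` to `∑_{j=0}^n C_j^n |j⟩⊗|n-j⟩` with
`C_j^n = √(n!/(j!(n-j)!)) α^j (-β)^{n-j}` and `α² + β² = 1`, carries the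
orthonormal family `{|n⟩⊗|0⟩}` to an orthonormal family in
`ℓ²(ℕ × ℕ)`; hence it extends to an isometry and the attenuation channel
is well defined. -/
theorem attenuation_image_orthonormal
    (α β : ℝ) (hαβ : α ^ 2 + β ^ 2 = 1)
    (v : ℕ → lp (fun _ : ℕ × ℕ => ℂ) 2)
    (hv : ∀ n : ℕ, v n =
      ∑ j ∈ Finset.range (n + 1),
        ((Real.sqrt ((n.factorial : ℝ) / ((j.factorial : ℝ) * ((n - j).factorial : ℝ)))
            * α ^ j * (-β) ^ (n - j) : ℝ) : ℂ) •
          lp.single 2 (j, n - j) (1 : ℂ)) :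
    Orthonormal ℂ v := by
  set c : ℕ → ℕ → ℝ := fun n j =>
    Real.sqrt ((n.factorial : ℝ) / ((j.factorial : ℝ) * ((n - j).factorial : ℝ)))
      * α ^ j * (-β) ^ (n - j) with hc
  rw [orthonormal_iff_ite]
  intro n m
  rw [hv n, hv m, inner_sum]
  simp only [sum_inner, inner_smul_left, inner_smul_right, Finset.mul_sum,
    inner_lp_single_single]
  by_cases hnm : n = m
  · subst hnm
    rw [if_pos rfl]
    have hdiag : ∀ k ∈ Finset.range (n+1),
        ∑ j ∈ Finset.range (n+1),
          ((c n k : ℂ) * ((starRingEnd ℂ) (c n j) *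
            if ((j, n - j) : ℕ × ℕ) = (k, n - k) then 1 else 0))
          = (c n k : ℂ) * (c n k : ℂ) := by
      intro k hk
      rw [Finset.sum_eq_single k]
      · simp [Complex.conj_ofReal]
      · intro j hj hjk
        rw [if_neg, mul_zero, mul_zero]
        simp only [Prod.mk.injEq, not_and]
        intro h; exact absurd h hjk
      · intro h; exact absurd hk h
    rw [Finset.sum_congr rfl hdiag]
    have hreal : ∑ k ∈ Finset.range (n+1), (c n k) * (c n k) = 1 := by
      have hb := add_pow (α^2) (β^2) n
      rw [hαβ, one_pow] at hb
      rw [hb]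
      apply Finset.sum_congr rfl
      intro k hk
      have hk' : k ≤ n := Nat.lt_succ_iff.mp (Finset.mem_range.mp hk)
      have hnn : (0:ℝ) ≤ (n.factorial : ℝ) / ((k.factorial : ℝ) * ((n-k).factorial : ℝ)) := by
        positivity
      have hsq : (Real.sqrt ((n.factorial : ℝ) / ((k.factorial : ℝ) * ((n-k).factorial : ℝ))))^2
          = (n.choose k : ℝ) := by
        rw [Real.sq_sqrt hnn, Nat.cast_choose ℝ hk']
      have halpha : α^k * α^k = (α^2)^k := by
        rw [← pow_add, ← two_mul, pow_mul]
      have hneg : (-β)^(n-k) * (-β)^(n-k) = (β^2)^(n-k) := by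
        rw [← pow_add, ← two_mul, pow_mul, neg_sq]
      calc c n k * c n k
          = (Real.sqrt ((n.factorial : ℝ) / ((k.factorial : ℝ) * ((n-k).factorial : ℝ))))^2
              * (α^k * α^k) * ((-β)^(n-k) * (-β)^(n-k)) := by
            rw [hc]; ring
        _ = (α^2)^k * (β^2)^(n-k) * (n.choose k : ℝ) := by
            rw [hsq, halpha, hneg]; ring
    calc ∑ k ∈ Finset.range (n+1), (c n k : ℂ) * (c n k : ℂ)
        = ((∑ k ∈ Finset.range (n+1), (c n k) * (c n k) : ℝ) : ℂ) := by
          push_cast; ring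
      _ = 1 := by rw [hreal]; norm_num
  · rw [if_neg hnm]
    apply Finset.sum_eq_zero
    intro k hk
    apply Finset.sum_eq_zero
    intro j hj
    rw [if_neg, mul_zero, mul_zero]
    simp only [Prod.mk.injEq, not_and]
    intro h
    simp only [Finset.mem_range, Nat.lt_succ_iff] at hj hk
    omega
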